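/- Let 0 < b < a < 2 with powers defined via the principal branch on the upper half-plane, and suppose 1 < b < 2. Then there exists z in the open upper half-plane such that Im((z^a − 1)/(z^b − 1)) < 0 and Re((z^a − 1)/(z^b − 1)) > 0. Consequently G₀(a,b) := inf{ arg((z^a−1)/(z^b−1))/π : z in the upper half-plane } < 0. -/

import Mathlib

/-- The argument function with values in `[0, 2π)`. -/
noncomputable def Arg2 (z : ℂ) : ℝ :=
  if Complex.arg z < 0 then Complex.arg z + 2 * Real.pi else Complex.arg z

/-!
Take `z = r e^{iθ}` with `π / b < θ < π`. Then `bθ` and `aθ` lie in `(π, 2π)`, so `u = z^a` and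
`v = z^b` lie in the lower half-plane, and for `r` small `|u| = r^a` is negligible against
`-Im v = r^b |sin bθ|`. The imaginary part of `(u - 1)/(v - 1)` has the sign of
`Im u (Re v - 1) + (1 - Re u) Im v`, which is then dominated by `Im v < 0`; its real part is positive
because `u - 1` and `v - 1` both lie in the third quadrant. As `Arg2` of two points of the lower
half-plane differ by `arg ((u - 1)/(v - 1)) < 0`, the infimum is negative.
-/

open Complex Real

lemma im_div_sub_one_neg {u v : ℂ} (hv : v.im < 0) (hv1 : ‖v‖ ≤ 1) (huv : ‖u‖ ≤ -v.im / 4) :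
    ((u - 1) / (v - 1)).im < 0 := by
  have hD : v - 1 ≠ 0 := fun h => by simp [sub_eq_zero.mp h] at hv
  rw [div_im, div_sub_div_same]
  refine div_neg_of_neg_of_pos ?_ (normSq_pos.mpr hD)
  simp only [sub_re, sub_im, one_re, one_im, sub_zero]
  have hvi : -v.im ≤ 1 := (neg_le_abs _).trans ((abs_im_le_norm v).trans hv1)
  have h1 : u.im * (v.re - 1) ≤ ‖u‖ * 2 := by
    refine (le_abs_self _).trans ?_
    rw [abs_mul]
    refine mul_le_mul (abs_im_le_norm u) ?_ (abs_nonneg _) (norm_nonneg u)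
    have := abs_le.mp ((abs_re_le_norm v).trans hv1)
    exact abs_le.mpr ⟨by linarith, by linarith⟩
  have h2 : (u.re - 1) * -v.im ≤ (‖u‖ - 1) * -v.im :=
    mul_le_mul_of_nonneg_right (by linarith [re_le_norm u]) (by linarith)
  nlinarith [norm_nonneg u]

lemma re_div_sub_one_pos {u v : ℂ} (hu : ‖u‖ < 1) (hv : ‖v‖ < 1) (huv : 0 ≤ u.im * v.im) :
    0 < ((u - 1) / (v - 1)).re := by
  have hvr := (re_le_norm v).trans_lt hv
  have hD : v - 1 ≠ 0 := fun h => by simp [sub_eq_zero.mp h] at hvr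
  rw [div_re, ← add_div]
  refine div_pos ?_ (normSq_pos.mpr hD)
  simp only [sub_re, sub_im, one_re, one_im, sub_zero]
  nlinarith [(re_le_norm u).trans_lt hu]

lemma Arg2_nonneg (z : ℂ) : 0 ≤ Arg2 z := by
  unfold Arg2
  split_ifs with h
  · linarith [neg_pi_lt_arg z]
  · exact not_lt.mp h

lemma Arg2_lt_two_pi (z : ℂ) : Arg2 z < 2 * π := by
  unfold Arg2
  split_ifs with h
  · linarith
  · linarith [arg_le_pi z, pi_pos]

lemma Arg2_of_im_neg {z : ℂ} (hz : z.im < 0) : Arg2 z = arg z + 2 * π :=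
  if_pos (arg_neg_iff.mpr hz)

lemma Arg2_sub_Arg2_of_im_neg {x y : ℂ} (hx : x.im < 0) (hy : y.im < 0) :
    Arg2 x - Arg2 y = arg (x / y) := by
  have hx0 : x ≠ 0 := fun h => by simp [h] at hx
  have hy0 : y ≠ 0 := fun h => by simp [h] at hy
  have hxa := arg_neg_iff.mpr hx
  have hya := arg_neg_iff.mpr hy
  -- both arguments lie in `(-π, 0)`, so `arg x - arg y` is already the principal representative
  rw [Arg2_of_im_neg hx, Arg2_of_im_neg hy, ← arg_coe_angle_toReal_eq_arg (x / y),
    arg_div_coe_angle hx0 hy0, ← Real.Angle.coe_sub, Real.Angle.toReal_coe_eq_self_iff.mpr]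
  · ring
  · constructor <;> linarith [neg_pi_lt_arg x, neg_pi_lt_arg y]

lemma neg_two_lt_Arg2_sub_Arg2_div_pi (x y : ℂ) : -2 < (Arg2 x - Arg2 y) / π := by
  rw [lt_div_iff₀ pi_pos]
  linarith [Arg2_nonneg x, Arg2_lt_two_pi y]

lemma polar_cpow {r θ : ℝ} (hr : 0 < r) (hθ : θ ∈ Set.Ioc (-π) π) (c : ℝ) :
    ‖((r : ℂ) * (Complex.cos θ + Complex.sin θ * I)) ^ (c : ℂ)‖ = r ^ c ∧
      (((r : ℂ) * (Complex.cos θ + Complex.sin θ * I)) ^ (c : ℂ)).im = r ^ c * Real.sin (c * θ) := by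
  have hnorm : ‖(r : ℂ) * (Complex.cos θ + Complex.sin θ * I)‖ = r := by
    rw [norm_mul, norm_cos_add_sin_mul_I, norm_real, Real.norm_of_nonneg hr.le, mul_one]
  refine ⟨by rw [norm_cpow_real, hnorm], ?_⟩
  rw [cpow_ofReal_im, hnorm, arg_mul_cos_add_sin_mul_I hr hθ, mul_comm θ]

lemma sin_neg_of_pi_lt_of_lt_two_pi {x : ℝ} (h1 : π < x) (h2 : x < 2 * π) : Real.sin x < 0 := by
  rw [← Real.sin_sub_two_pi]
  exact sin_neg_of_neg_of_neg_pi_lt (by linarith) (by linarith)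

lemma exists_im_pos_cpow_im_neg {a b : ℝ} (hb : 1 < b) (hba : b < a) (ha : a < 2) :
    ∃ z : ℂ, 0 < z.im ∧ (z ^ (a : ℂ)).im < 0 ∧ (z ^ (b : ℂ)).im < 0 ∧ ‖z ^ (b : ℂ)‖ < 1 ∧
      ‖z ^ (a : ℂ)‖ ≤ -(z ^ (b : ℂ)).im / 4 := by
  obtain ⟨θ, hθb, hθπ⟩ := exists_between (div_lt_self pi_pos hb)
  have hθ : 0 < θ := (div_pos pi_pos (by linarith)).trans hθb
  have hbθ : π < b * θ := (div_lt_iff₀' (by linarith)).mp hθb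
  have hsa : Real.sin (a * θ) < 0 := sin_neg_of_pi_lt_of_lt_two_pi (by nlinarith) (by nlinarith)
  have hsb : Real.sin (b * θ) < 0 := sin_neg_of_pi_lt_of_lt_two_pi hbθ (by nlinarith)
  set ε := -Real.sin (b * θ) / 4 with hε_def
  have hε : 0 < ε := by linarith
  have hε1 : ε < 1 := by linarith [neg_one_le_sin (b * θ)]
  set r := ε ^ (a - b)⁻¹
  have hr : 0 < r := rpow_pos_of_pos hε _
  have hrab : r ^ a = ε * r ^ b := by
    rw [← sub_add_cancel a b, rpow_add hr, rpow_inv_rpow hε.le (sub_pos.mpr hba).ne']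
  have hθ' : θ ∈ Set.Ioc (-π) π := ⟨by linarith, hθπ.le⟩
  obtain ⟨hna, hia⟩ := polar_cpow hr hθ' a
  obtain ⟨hnb, hib⟩ := polar_cpow hr hθ' b
  refine ⟨r * (Complex.cos θ + Complex.sin θ * I), ?_, ?_, ?_, ?_, ?_⟩
  · simpa [← ofReal_cos, ← ofReal_sin] using mul_pos hr (sin_pos_of_pos_of_lt_pi hθ hθπ)
  · rw [hia]; exact mul_neg_of_pos_of_neg (rpow_pos_of_pos hr a) hsa
  · rw [hib]; exact mul_neg_of_pos_of_neg (rpow_pos_of_pos hr b) hsb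
  · rw [hnb]; exact rpow_lt_one hr.le (rpow_lt_one hε.le hε1 (by simpa using hba)) (by linarith)
  · rw [hna, hib, hrab, hε_def]
    exact le_of_eq (by ring)

theorem stmt8 (a b : ℝ) (hb : 1 < b) (hba : b < a) (ha : a < 2) :
    (∃ z : ℂ, 0 < z.im ∧ ((z ^ (a:ℂ) - 1) / (z ^ (b:ℂ) - 1)).im < 0 ∧
       0 < ((z ^ (a:ℂ) - 1) / (z ^ (b:ℂ) - 1)).re) ∧
    sInf {x : ℝ | ∃ z : ℂ, 0 < z.im ∧
       x = (Arg2 (z ^ (a:ℂ) - 1) - Arg2 (z ^ (b:ℂ) - 1)) / Real.pi} < 0 := by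
  obtain ⟨z, hz, hia, hib, hnb, hnab⟩ := exists_im_pos_cpow_im_neg hb hba ha
  have hna : ‖z ^ (a : ℂ)‖ < 1 := by
    linarith [neg_le_abs (z ^ (b : ℂ)).im, abs_im_le_norm (z ^ (b : ℂ))]
  have him := im_div_sub_one_neg hib hnb.le hnab
  refine ⟨⟨z, hz, him, re_div_sub_one_pos hna hnb (mul_pos_of_neg_of_neg hia hib).le⟩, ?_⟩
  have hbdd : BddBelow {x : ℝ | ∃ z : ℂ, 0 < z.im ∧
      x = (Arg2 (z ^ (a:ℂ) - 1) - Arg2 (z ^ (b:ℂ) - 1)) / π} := by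
    refine ⟨-2, ?_⟩
    rintro x ⟨w, -, rfl⟩
    exact (neg_two_lt_Arg2_sub_Arg2_div_pi _ _).le
  refine (csInf_le hbdd ⟨z, hz, rfl⟩).trans_lt (div_neg_of_neg_of_pos ?_ pi_pos)
  rw [Arg2_sub_Arg2_of_im_neg (by simpa using hia) (by simpa using hib)]
  exact arg_neg_iff.mpr him
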